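/- arXiv:2302.09656 — 3 statements merged into one kernel-verified Lean document; each statement's English description precedes it below -/
import Mathlib

section
/- Let (Θ, ℬ) be a measurable space, 𝒫 a nonempty set of probability measures on Θ, and 𝓛 a nonempty set of bounded measurable functions Θ → [0, ∞) whose pointwise supremum L̄(θ) := sup_{L∈𝓛} L(θ) and pointwise infimum L̲(θ) := inf_{L∈𝓛} L(θ) are measurable, with L̄ bounded. Fix A ∈ ℬ and suppose c := sup_{P∈𝒫} ∫_A L̄ dP + inf_{P∈𝒫} ∫_{Aᶜ} L̲ dP > 0. Then for every P ∈ 𝒫 and every L ∈ 𝓛 with ∫_Θ L dP > 0, the posterior satisfies Post(P, L)(A) ≤ (sup_{P′∈𝒫} ∫_A L̄ dP′) / c; hence the upper posterior probability P̄_D(A) := sup{Post(P,L)(A) : P ∈ 𝒫, L ∈ 𝓛, ∫_Θ L dP > 0} is at most (sup_{P∈𝒫} ∫_A L̄ dP) / c. -/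
open MeasureTheory

private lemma integrable_of_bdd' {Θ : Type*} [MeasurableSpace Θ] (P : Measure Θ)
    [IsProbabilityMeasure P] (f : Θ → ℝ) (hf : Measurable f) (h0 : ∀ θ, 0 ≤ f θ)
    (C : ℝ) (hC : ∀ θ, f θ ≤ C) : Integrable f P :=
  (integrable_const C).mono' hf.aestronglyMeasurable
    (Filter.Eventually.of_forall fun θ => by
      rw [Real.norm_eq_abs, abs_of_nonneg (h0 θ)]; exact hC θ)

/-- Generalized Bayes inequality: for any prior P in the credal prior set Ps and any likelihood
L in the credal likelihood set Ls (with positive normalizing constant), the posterior probability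
of A is at most (sup_{P′∈Ps} ∫_A L̄ dP′) / c, where
c = sup_{P∈Ps} ∫_A L̄ dP + inf_{P∈Ps} ∫_{Aᶜ} L̲ dP > 0. -/
theorem upper_posterior_le
    {Θ : Type*} [MeasurableSpace Θ]
    (Ps : Set (Measure Θ)) (hne : Ps.Nonempty) (hPs : ∀ P ∈ Ps, IsProbabilityMeasure P)
    (Ls : Set (Θ → ℝ)) (hLsne : Ls.Nonempty)
    (hLs : ∀ L ∈ Ls, Measurable L ∧ (∀ θ, 0 ≤ L θ) ∧ ∃ C, ∀ θ, L θ ≤ C)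
    (Lbar Llow : Θ → ℝ)
    (hLbar : ∀ θ, IsLUB ((fun L : Θ → ℝ => L θ) '' Ls) (Lbar θ))
    (hLlow : ∀ θ, IsGLB ((fun L : Θ → ℝ => L θ) '' Ls) (Llow θ))
    (hLbarMeas : Measurable Lbar) (hLlowMeas : Measurable Llow)
    (hLbarBdd : ∃ C, ∀ θ, Lbar θ ≤ C)
    (A : Set Θ) (hA : MeasurableSet A)
    (hc : 0 < sSup ((fun P => ∫ θ in A, Lbar θ ∂P) '' Ps) +
            sInf ((fun P => ∫ θ in Aᶜ, Llow θ ∂P) '' Ps)) :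
    ∀ P ∈ Ps, ∀ L ∈ Ls, 0 < (∫ θ, L θ ∂P) →
      (∫ θ in A, L θ ∂P) / (∫ θ, L θ ∂P) ≤
        sSup ((fun P => ∫ θ in A, Lbar θ ∂P) '' Ps) /
          (sSup ((fun P => ∫ θ in A, Lbar θ ∂P) '' Ps) +
            sInf ((fun P => ∫ θ in Aᶜ, Llow θ ∂P) '' Ps)) := by
  intro P hP L hL hLpos
  haveI := hPs P hP
  obtain ⟨hLmeas, hL0, C, hLC⟩ := hLs L hL
  obtain ⟨Cb, hCb⟩ := hLbarBdd
  obtain ⟨L0, hL0mem⟩ := hLsne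
  obtain ⟨hL0meas, hL00, C0, hC0⟩ := hLs L0 hL0mem
  set S := sSup ((fun P => ∫ θ in A, Lbar θ ∂P) '' Ps) with hS
  set I := sInf ((fun P => ∫ θ in Aᶜ, Llow θ ∂P) '' Ps) with hI
  have hLle : ∀ θ, L θ ≤ Lbar θ := fun θ => (hLbar θ).1 ⟨L, hL, rfl⟩
  have hLbar0 : ∀ θ, 0 ≤ Lbar θ := fun θ => le_trans (hL0 θ) (hLle θ)
  have hLlow0 : ∀ θ, 0 ≤ Llow θ := fun θ =>
    (hLlow θ).2 (fun x hx => by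
      obtain ⟨L', hL', rfl⟩ := hx
      exact (hLs L' hL').2.1 θ)
  have hLlowle : ∀ θ, Llow θ ≤ L θ := fun θ => (hLlow θ).1 ⟨L, hL, rfl⟩
  have hLlowC : ∀ θ, Llow θ ≤ C0 := fun θ =>
    le_trans ((hLlow θ).1 ⟨L0, hL0mem, rfl⟩) (hC0 θ)
  have hintL : Integrable L P := integrable_of_bdd' P L hLmeas hL0 C hLC
  have hintLbarP : ∀ P' ∈ Ps, Integrable Lbar P' := fun P' hP' => by
    haveI := hPs P' hP'
    exact integrable_of_bdd' P' Lbar hLbarMeas hLbar0 Cb hCb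
  have hintLlowP : ∀ P' ∈ Ps, Integrable Llow P' := fun P' hP' => by
    haveI := hPs P' hP'
    exact integrable_of_bdd' P' Llow hLlowMeas hLlow0 C0 hLlowC
  -- BddAbove for the sSup set
  have hbddA : BddAbove ((fun P => ∫ θ in A, Lbar θ ∂P) '' Ps) := by
    refine ⟨Cb, fun x hx => ?_⟩
    obtain ⟨P', hP', rfl⟩ := hx
    haveI := hPs P' hP'
    calc ∫ θ in A, Lbar θ ∂P' ≤ ∫ θ, Lbar θ ∂P' :=
          setIntegral_le_integral (hintLbarP P' hP')
            (Filter.Eventually.of_forall hLbar0)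
      _ ≤ ∫ _θ, Cb ∂P' :=
          integral_mono (hintLbarP P' hP') (integrable_const Cb) hCb
      _ = Cb := by simp
  have hbddB : BddBelow ((fun P => ∫ θ in Aᶜ, Llow θ ∂P) '' Ps) := by
    refine ⟨0, fun x hx => ?_⟩
    obtain ⟨P', hP', rfl⟩ := hx
    exact setIntegral_nonneg hA.compl (fun θ _ => hLlow0 θ)
  -- key inequalities
  have haS : (∫ θ in A, L θ ∂P) ≤ S := by
    calc (∫ θ in A, L θ ∂P) ≤ ∫ θ in A, Lbar θ ∂P :=
          setIntegral_mono_on (hintL.restrict) ((hintLbarP P hP).restrict) hA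
            (fun θ _ => hLle θ)
      _ ≤ S := le_csSup hbddA ⟨P, hP, rfl⟩
  have hIb : I ≤ ∫ θ in Aᶜ, L θ ∂P := by
    calc I ≤ ∫ θ in Aᶜ, Llow θ ∂P := csInf_le hbddB ⟨P, hP, rfl⟩
      _ ≤ ∫ θ in Aᶜ, L θ ∂P :=
          setIntegral_mono_on ((hintLlowP P hP).restrict) (hintL.restrict) hA.compl
            (fun θ _ => hLlowle θ)
  have hI0 : 0 ≤ I := le_csInf (hne.image _) (fun x hx => by
    obtain ⟨P', hP', rfl⟩ := hx
    exact setIntegral_nonneg hA.compl (fun θ _ => hLlow0 θ))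
  have ha0 : 0 ≤ ∫ θ in A, L θ ∂P := setIntegral_nonneg hA (fun θ _ => hL0 θ)
  have hsum : (∫ θ in A, L θ ∂P) + (∫ θ in Aᶜ, L θ ∂P) = ∫ θ, L θ ∂P :=
    integral_add_compl hA hintL
  have hS0 : 0 ≤ S := le_trans ha0 haS
  rw [div_le_div_iff₀ hLpos hc]
  nlinarith [hIb, haS, hI0, ha0, hsum]
end

section
/- Let P̂_1, …, P̂_N be probability measures on a measurable space (𝒴, 𝒜), let α ∈ (0,1), and let R_1, …, R_N ∈ 𝒜 satisfy P̂_k(R_k) ≥ 1 − α for each k. Set IR_α := ⋃_{k=1}^N R_k, and let 𝒬 be the convex hull of {P̂_1, …, P̂_N}. Then the gap between the upper and lower probabilities of IR_α satisfies sup_{Q∈𝒬} Q(IR_α) − inf_{Q∈𝒬} Q(IR_α) ≤ α. -/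
open MeasureTheory ENNReal

/-- The gap between the upper and lower probabilities of the imprecise highest density region
IR_α = ⋃_k R_k, over the convex hull 𝒬 of {P̂_1, …, P̂_N}, is at most α. -/
theorem ihdr_gap_le
    {𝒴 : Type*} [MeasurableSpace 𝒴] {N : ℕ} (hN : 0 < N)
    (P : Fin N → Measure 𝒴) (hP : ∀ k, IsProbabilityMeasure (P k))
    (α : ℝ≥0∞) (hα0 : 0 < α) (hα1 : α < 1)
    (R : Fin N → Set 𝒴) (hR : ∀ k, MeasurableSet (R k))
    (hcov : ∀ k, 1 - α ≤ P k (R k)) :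
    (⨆ Q ∈ {Q : Measure 𝒴 |
        ∃ w : Fin N → ℝ≥0∞, (∑ k, w k) = 1 ∧ Q = ∑ k, w k • P k}, Q (⋃ k, R k)) -
      (⨅ Q ∈ {Q : Measure 𝒴 |
        ∃ w : Fin N → ℝ≥0∞, (∑ k, w k) = 1 ∧ Q = ∑ k, w k • P k}, Q (⋃ k, R k)) ≤ α := by
  set S := {Q : Measure 𝒴 |
        ∃ w : Fin N → ℝ≥0∞, (∑ k, w k) = 1 ∧ Q = ∑ k, w k • P k} with hS
  have hval : ∀ Q ∈ S, 1 - α ≤ Q (⋃ k, R k) ∧ Q (⋃ k, R k) ≤ 1 := by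
    rintro Q ⟨w, hw, rfl⟩
    constructor
    · calc 1 - α = ∑ k, w k * (1 - α) := by
            rw [← Finset.sum_mul, hw, one_mul]
      _ ≤ ∑ k, w k * P k (⋃ k, R k) := by
            apply Finset.sum_le_sum
            intro k _
            exact mul_le_mul_right (le_trans (hcov k)
              (measure_mono (Set.subset_iUnion R k))) _
      _ = (∑ k, w k • P k) (⋃ k, R k) := by
            simp [Measure.coe_finset_sum, Finset.sum_apply]
    · calc (∑ k, w k • P k) (⋃ k, R k) ≤ (∑ k, w k • P k) Set.univ :=
            measure_mono (Set.subset_univ _)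
      _ = ∑ k, w k * P k Set.univ := by
            simp [Measure.coe_finset_sum, Finset.sum_apply]
      _ = 1 := by simp [measure_univ, hw]
  rw [tsub_le_iff_right]
  have hsup : (⨆ Q ∈ S, Q (⋃ k, R k)) ≤ 1 := by
    apply iSup₂_le
    intro Q hQ
    exact (hval Q hQ).2
  have hinf : 1 - α ≤ ⨅ Q ∈ S, Q (⋃ k, R k) := by
    apply le_iInf₂
    intro Q hQ
    exact (hval Q hQ).1
  calc (⨆ Q ∈ S, Q (⋃ k, R k)) ≤ 1 := hsup
    _ = α + (1 - α) := by
        rw [add_tsub_cancel_of_le hα1.le]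
    _ ≤ α + ⨅ Q ∈ S, Q (⋃ k, R k) := add_le_add_right hinf _
end

section
/- Let (Θ, ℬ) be a measurable space, let P_1, …, P_J be probability measures on Θ (the prior credal set extrema), and let L_1, …, L_I : Θ → [0, ∞) be bounded measurable functions (the likelihood credal set extrema) with ∫_Θ L_i dP_j > 0 for all i, j. Let α_1, …, α_J ≥ 0 with ∑_j α_j = 1 and γ_1, …, γ_I ≥ 0 with ∑_i γ_i = 1, and set P° := ∑_j α_j P_j and L° := ∑_i γ_i L_i; assume ∫_Θ L° dP° > 0. Then the posterior from the pair (P°, L°) lies in the convex hull of the posteriors from the extreme pairs: Post(P°, L°) = ∑_{i,j} β_{ij} Post(P_j, L_i), where β_{ij} := γ_i α_j (∫_Θ L_i dP_j) / (∫_Θ L° dP°), and the β_{ij} are nonnegative and sum to 1. -/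
open MeasureTheory ENNReal

/-- The posterior obtained from a convex combination of priors P° = ∑_j α_j P_j and a convex
combination of likelihoods L° = ∑_i γ_i L_i lies in the convex hull of the posteriors from the
extreme pairs: Post(P°, L°) = ∑_{i,j} β_{ij} Post(P_j, L_i), with
β_{ij} = γ_i α_j (∫ L_i dP_j) / (∫ L° dP°) nonnegative and summing to 1. -/
theorem posterior_of_convexCombination
    {Θ : Type*} [MeasurableSpace Θ] {I J : ℕ}
    (P : Fin J → Measure Θ) (hP : ∀ j, IsProbabilityMeasure (P j))
    (L : Fin I → Θ → ℝ) (hLmeas : ∀ i, Measurable (L i))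
    (hLnn : ∀ i θ, 0 ≤ L i θ) (hLbdd : ∀ i, ∃ C, ∀ θ, L i θ ≤ C)
    (hpos : ∀ i j, 0 < ∫ θ, L i θ ∂(P j))
    (α : Fin J → ℝ) (hα : ∀ j, 0 ≤ α j) (hα1 : (∑ j, α j) = 1)
    (γ : Fin I → ℝ) (hγ : ∀ i, 0 ≤ γ i) (hγ1 : (∑ i, γ i) = 1)
    (P0 : Measure Θ) (hP0 : P0 = ∑ j, ENNReal.ofReal (α j) • P j)
    (L0 : Θ → ℝ) (hL0 : ∀ θ, L0 θ = ∑ i, γ i * L i θ)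
    (hpos0 : 0 < ∫ θ, L0 θ ∂P0)
    (β : Fin I → Fin J → ℝ)
    (hβ : ∀ i j, β i j = γ i * α j * (∫ θ, L i θ ∂(P j)) / (∫ θ, L0 θ ∂P0)) :
    (∀ i j, 0 ≤ β i j) ∧ (∑ i, ∑ j, β i j) = 1 ∧
      ∀ A : Set Θ, MeasurableSet A →
        (∫ θ in A, L0 θ ∂P0) / (∫ θ, L0 θ ∂P0) =
          ∑ i, ∑ j, β i j * ((∫ θ in A, L i θ ∂(P j)) / (∫ θ, L i θ ∂(P j))) := by
  -- Integrability of each `L i` with respect to each `P j` (and its restrictions).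
  have hint : ∀ i j, Integrable (L i) (P j) := by
    intro i j
    obtain ⟨C, hC⟩ := hLbdd i
    exact Integrable.mono' (integrable_const C) (hLmeas i).aestronglyMeasurable
      (ae_of_all _ fun θ => by rw [Real.norm_eq_abs, abs_of_nonneg (hLnn i θ)]; exact hC θ)
  have hintL0 : ∀ j, Integrable L0 (P j) := by
    intro j
    have : Integrable (fun θ => ∑ i, γ i * L i θ) (P j) :=
      integrable_finset_sum _ fun i _ => ((hint i j).const_mul (γ i))
    exact this.congr (ae_of_all _ fun θ => (hL0 θ).symm)
  -- The key computation: the numerator decomposes as a double sum.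
  have key : ∀ A : Set Θ, MeasurableSet A →
      (∫ θ in A, L0 θ ∂P0) = ∑ i, ∑ j, γ i * α j * ∫ θ in A, L i θ ∂(P j) := by
    intro A hA
    have hres : P0.restrict A = ∑ j, ENNReal.ofReal (α j) • (P j).restrict A := by
      rw [hP0]; ext s hs
      simp [Measure.finset_sum_apply, Measure.restrict_apply hs]
    have h1 : (∫ θ in A, L0 θ ∂P0) = ∑ j, α j * ∫ θ in A, L0 θ ∂(P j) := by
      rw [show (∫ θ in A, L0 θ ∂P0) = ∫ θ, L0 θ ∂(P0.restrict A) from rfl, hres,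
        integral_finset_sum_measure (fun j _ =>
          ((hintL0 j).restrict.smul_measure ENNReal.ofReal_ne_top))]
      refine Finset.sum_congr rfl fun j _ => ?_
      rw [integral_smul_measure, ENNReal.toReal_ofReal (hα j), smul_eq_mul]
    have h2 : ∀ j : Fin J, (∫ θ in A, L0 θ ∂(P j)) = ∑ i, γ i * ∫ θ in A, L i θ ∂(P j) := by
      intro j
      rw [show (∫ θ in A, L0 θ ∂(P j)) = ∫ θ, ∑ i, γ i * L i θ ∂((P j).restrict A) from
        integral_congr_ae (ae_of_all _ fun θ => hL0 θ),
        integral_finset_sum _ fun i _ => ((hint i j).const_mul (γ i)).restrict]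
      exact Finset.sum_congr rfl fun i _ => MeasureTheory.integral_const_mul _ _
    rw [h1]
    simp_rw [h2, Finset.mul_sum]
    rw [Finset.sum_comm]
    exact Finset.sum_congr rfl fun i _ => Finset.sum_congr rfl fun j _ => by ring
  have keyU : (∫ θ, L0 θ ∂P0) = ∑ i, ∑ j, γ i * α j * ∫ θ, L i θ ∂(P j) := by
    have := key Set.univ MeasurableSet.univ
    simpa [Measure.restrict_univ] using this
  refine ⟨?_, ?_, ?_⟩
  · intro i j
    rw [hβ]
    exact div_nonneg (mul_nonneg (mul_nonneg (hγ i) (hα j)) (hpos i j).le) hpos0.le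
  · simp_rw [hβ, div_eq_mul_inv, ← Finset.sum_mul]
    rw [← keyU, mul_inv_cancel₀ hpos0.ne']
  · intro A hA
    have hterm : ∀ i j, β i j * ((∫ θ in A, L i θ ∂(P j)) / (∫ θ, L i θ ∂(P j))) =
        γ i * α j * (∫ θ in A, L i θ ∂(P j)) / (∫ θ, L0 θ ∂P0) := by
      intro i j
      rw [hβ]
      have hD : (∫ θ, L i θ ∂(P j)) ≠ 0 := (hpos i j).ne'
      field_simp
    simp_rw [hterm, div_eq_mul_inv, ← Finset.sum_mul]
    rw [← key A hA]
end
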